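/- Let A ∈ ℝ^{n×n}, B ∈ ℝ^{n×m} with full column rank, and P := I − B(BᵀB)⁻¹Bᵀ. Then for every F ∈ ℝ^{m×n}, the maximum singular value satisfies σ̄(A + BF) ≥ σ̄(PA). In particular, if σ̄(PA) ≥ 1, no state feedback gain F can make σ̄(A + BF) < 1. -/
import Mathlib


open Matrix

/-- The maximum singular value (spectral norm) of a real square matrix. -/
noncomputable def maxSingularValue {n : ℕ} (A : Matrix (Fin n) (Fin n) ℝ) : ℝ :=
  ‖Matrix.toEuclideanCLM (𝕜 := ℝ) A‖

lemma isUnit_transpose_mul_self_of_rank {n m : ℕ} (B : Matrix (Fin n) (Fin m) ℝ)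
    (hB : B.rank = m) : IsUnit (Bᵀ * B) := by
  have hr : (Bᵀ * B).rank = m := by rw [Matrix.rank_transpose_mul_self, hB]
  have hsurj : Function.Surjective ((Bᵀ * B).mulVecLin) := by
    rw [← LinearMap.range_eq_top]
    apply Submodule.eq_top_of_finrank_eq
    rw [← Matrix.rank, hr]
    simp [Module.finrank_pi]
  have hinj : Function.Injective ((Bᵀ * B).mulVecLin) :=
    (LinearMap.injective_iff_surjective (f := (Bᵀ * B).mulVecLin)).mpr hsurj
  exact Matrix.mulVec_injective_iff_isUnit.mp hinj

lemma P_mul_B {n m : ℕ} (B : Matrix (Fin n) (Fin m) ℝ) (hB : B.rank = m) :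
    (1 - B * (Bᵀ * B)⁻¹ * Bᵀ) * B = 0 := by
  have h := isUnit_transpose_mul_self_of_rank B hB
  have hdet : IsUnit (Bᵀ * B).det := (Matrix.isUnit_iff_isUnit_det _).mp h
  have key : B * (Bᵀ * B)⁻¹ * Bᵀ * B = B := by
    rw [Matrix.mul_assoc (B * (Bᵀ * B)⁻¹), Matrix.mul_assoc B,
      Matrix.nonsing_inv_mul _ hdet, Matrix.mul_one]
  rw [Matrix.sub_mul, Matrix.one_mul, key, sub_self]

lemma P_idem {n m : ℕ} (B : Matrix (Fin n) (Fin m) ℝ) (hB : B.rank = m) :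
    (1 - B * (Bᵀ * B)⁻¹ * Bᵀ) * (1 - B * (Bᵀ * B)⁻¹ * Bᵀ) = (1 - B * (Bᵀ * B)⁻¹ * Bᵀ) := by
  have h0 : (1 - B * (Bᵀ * B)⁻¹ * Bᵀ) * (B * ((Bᵀ * B)⁻¹ * Bᵀ)) = 0 := by
    rw [← Matrix.mul_assoc, P_mul_B B hB, Matrix.zero_mul]
  calc (1 - B * (Bᵀ * B)⁻¹ * Bᵀ) * (1 - B * (Bᵀ * B)⁻¹ * Bᵀ)
      = (1 - B * (Bᵀ * B)⁻¹ * Bᵀ) * 1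
        - (1 - B * (Bᵀ * B)⁻¹ * Bᵀ) * (B * ((Bᵀ * B)⁻¹ * Bᵀ)) := by
        rw [← Matrix.mul_sub, Matrix.mul_assoc B]
    _ = (1 - B * (Bᵀ * B)⁻¹ * Bᵀ) := by rw [h0, sub_zero, Matrix.mul_one]

lemma P_symm {n m : ℕ} (B : Matrix (Fin n) (Fin m) ℝ) :
    star (1 - B * (Bᵀ * B)⁻¹ * Bᵀ) = (1 - B * (Bᵀ * B)⁻¹ * Bᵀ) := by
  show (1 - B * (Bᵀ * B)⁻¹ * Bᵀ)ᴴ = _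
  rw [Matrix.conjTranspose_eq_transpose_of_trivial]
  rw [Matrix.transpose_sub, Matrix.transpose_one, Matrix.transpose_mul,
    Matrix.transpose_mul, Matrix.transpose_transpose, Matrix.transpose_nonsing_inv,
    Matrix.transpose_mul, Matrix.transpose_transpose, Matrix.mul_assoc]

lemma P_norm_le_one {n m : ℕ} (B : Matrix (Fin n) (Fin m) ℝ) (hB : B.rank = m) :
    maxSingularValue (1 - B * (Bᵀ * B)⁻¹ * Bᵀ) ≤ 1 := by
  unfold maxSingularValue
  set T := Matrix.toEuclideanCLM (𝕜 := ℝ) (1 - B * (Bᵀ * B)⁻¹ * Bᵀ) with hT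
  have hstar : star T = T := by
    rw [hT, ← map_star, P_symm]
  have hidem : T * T = T := by
    rw [hT, ← _root_.map_mul, P_idem B hB]
  have hcs : ‖T‖ * ‖T‖ = ‖T‖ := by
    calc ‖T‖ * ‖T‖ = ‖star T * T‖ := CStarRing.norm_star_mul_self.symm
      _ = ‖T‖ := by rw [hstar, hidem]
  nlinarith [norm_nonneg T]

/-- Let `B` have full column rank and `P := I - B (Bᵀ B)⁻¹ Bᵀ`. Then for
every feedback gain `F`, `σ̄(A + B F) ≥ σ̄(P A)`. In particular, if `σ̄(P A) ≥ 1`, no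
state feedback gain `F` can achieve `σ̄(A + B F) < 1`. -/
theorem sv_lower_bound_feedback {n m : ℕ}
    (A : Matrix (Fin n) (Fin n) ℝ)
    (B : Matrix (Fin n) (Fin m) ℝ) (hB : B.rank = m) :
    (∀ F : Matrix (Fin m) (Fin n) ℝ,
      maxSingularValue ((1 - B * (Bᵀ * B)⁻¹ * Bᵀ) * A) ≤ maxSingularValue (A + B * F)) ∧
    (1 ≤ maxSingularValue ((1 - B * (Bᵀ * B)⁻¹ * Bᵀ) * A) →
      ¬ ∃ F : Matrix (Fin m) (Fin n) ℝ, maxSingularValue (A + B * F) < 1) := by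
  set P : Matrix (Fin n) (Fin n) ℝ := 1 - B * (Bᵀ * B)⁻¹ * Bᵀ with hP
  have key : ∀ F : Matrix (Fin m) (Fin n) ℝ,
      maxSingularValue (P * A) ≤ maxSingularValue (A + B * F) := by
    intro F
    have hPA : P * A = P * (A + B * F) := by
      rw [Matrix.mul_add, ← Matrix.mul_assoc, P_mul_B B hB, Matrix.zero_mul, add_zero]
    rw [hPA]
    unfold maxSingularValue
    rw [_root_.map_mul]
    calc ‖Matrix.toEuclideanCLM (𝕜 := ℝ) P * Matrix.toEuclideanCLM (𝕜 := ℝ) (A + B * F)‖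
        ≤ ‖Matrix.toEuclideanCLM (𝕜 := ℝ) P‖ * ‖Matrix.toEuclideanCLM (𝕜 := ℝ) (A + B * F)‖ :=
          norm_mul_le _ _
      _ ≤ 1 * ‖Matrix.toEuclideanCLM (𝕜 := ℝ) (A + B * F)‖ :=
          mul_le_mul_of_nonneg_right (P_norm_le_one B hB) (norm_nonneg _)
      _ = ‖Matrix.toEuclideanCLM (𝕜 := ℝ) (A + B * F)‖ := one_mul _
  refine ⟨key, fun h1 ⟨F, hF⟩ => ?_⟩
  exact absurd (h1.trans (key F)) (not_le.mpr hF)
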